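/- arXiv:1309.5714 — 2 statements merged into one kernel-verified Lean document; each statement's English description precedes it below -/
import Mathlib

section
/- Let U ⊂ ℂ be an open set with compact complement. If g₁ and g₂ are both Green functions for U (i.e. each is harmonic on U, has the property that g(z) − log|z| remains bounded as z → ∞, and tends to 0 at every boundary point of U), then g₁ = g₂ on U. -/
/-!
For `ε > 0` the function `g₁ - (1 + ε) g₂` is harmonic, tends to `0` at the boundary and to `-∞`
at infinity (the logarithmic poles no longer cancel), so the maximum principle bounds it by `ε`
on `U`. Letting `ε → 0` gives `g₁ ≤ g₂`, and by symmetry `g₁ = g₂`.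
-/

/-- A real-valued function on an open set `U ⊆ ℂ` is harmonic if it is locally the
real part of a holomorphic function. -/
def IsHarmonicOn (g : ℂ → ℝ) (U : Set ℂ) : Prop :=
  ∀ z ∈ U, ∃ r > 0, Metric.ball z r ⊆ U ∧
    ∃ f : ℂ → ℂ, DifferentiableOn ℂ f (Metric.ball z r) ∧
      ∀ w ∈ Metric.ball z r, g w = (f w).re

open Filter Topology Metric Set Bornology

variable {u v : ℂ → ℝ} {U : Set ℂ}

namespace IsHarmonicOn

theorem continuousAt (hu : IsHarmonicOn u U) {z : ℂ} (hz : z ∈ U) : ContinuousAt u z := by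
  obtain ⟨r, hr, -, f, hf, hfu⟩ := hu z hz
  have hball : ball z r ∈ 𝓝 z := ball_mem_nhds z hr
  exact (Complex.continuous_re.continuousAt.comp (hf.continuousOn.continuousAt hball)).congr
    (eventuallyEq_of_mem hball fun w hw => (hfu w hw).symm)

theorem sub (hu : IsHarmonicOn u U) (hv : IsHarmonicOn v U) : IsHarmonicOn (u - v) U := by
  intro z hz
  obtain ⟨r₁, hr₁, hsub₁, f₁, hf₁, hfu₁⟩ := hu z hz
  obtain ⟨r₂, hr₂, -, f₂, hf₂, hfu₂⟩ := hv z hz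
  have hball₁ : ball z (min r₁ r₂) ⊆ ball z r₁ := ball_subset_ball (min_le_left _ _)
  have hball₂ : ball z (min r₁ r₂) ⊆ ball z r₂ := ball_subset_ball (min_le_right _ _)
  refine ⟨min r₁ r₂, lt_min hr₁ hr₂, hball₁.trans hsub₁, f₁ - f₂,
    (hf₁.mono hball₁).sub (hf₂.mono hball₂), fun w hw => ?_⟩
  simp [hfu₁ w (hball₁ hw), hfu₂ w (hball₂ hw)]

theorem const_mul (hu : IsHarmonicOn u U) (c : ℝ) : IsHarmonicOn (fun z => c * u z) U := by
  intro z hz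
  obtain ⟨r, hr, hsub, f, hf, hfu⟩ := hu z hz
  exact ⟨r, hr, hsub, fun w => c * f w, hf.const_mul _, fun w hw => by simp [hfu w hw]⟩

theorem isOpen_setOf_eq_of_isMaxOn (hu : IsHarmonicOn u U) {z₀ : ℂ} (hmax : IsMaxOn u U z₀) :
    IsOpen {z | z ∈ U ∧ u z = u z₀} := by
  rw [Metric.isOpen_iff]
  rintro w ⟨hwU, hw⟩
  obtain ⟨r, hr, hsub, f, hf, hfu⟩ := hu w hwU
  refine ⟨r, hr, fun x hx => ⟨hsub hx, ?_⟩⟩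
  -- `exp ∘ f` is holomorphic with modulus `exp ∘ u`, so the maximum modulus principle applies.
  have hmax' : IsMaxOn (norm ∘ fun z => Complex.exp (f z)) (ball w r) w := fun y hy => by
    change ‖Complex.exp (f y)‖ ≤ ‖Complex.exp (f w)‖
    rw [Complex.norm_exp, Complex.norm_exp, ← hfu y hy, ← hfu w (mem_ball_self hr), hw]
    exact Real.exp_le_exp.2 (hmax (hsub hy))
  have heq := Complex.eqOn_of_isPreconnected_of_isMaxOn_norm (convex_ball w r).isPreconnected
    isOpen_ball hf.cexp (mem_ball_self hr) hmax' hx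
  have hexp : ‖Complex.exp (f x)‖ = ‖Complex.exp (f w)‖ := congrArg norm heq
  simp only [Complex.norm_exp, ← hfu x hx, ← hfu w (mem_ball_self hr)] at hexp
  exact (Real.exp_injective hexp).trans hw

theorem isClopen_setOf_eq_of_isMaxOn (hu : IsHarmonicOn u U) {z₀ : ℂ} (hmax : IsMaxOn u U z₀)
    (hcl : closure {z | z ∈ U ∧ u z = u z₀} ⊆ U) : IsClopen {z | z ∈ U ∧ u z = u z₀} := by
  set S := {z | z ∈ U ∧ u z = u z₀}
  refine ⟨closure_subset_iff_isClosed.1 fun ξ hξ => ⟨hcl hξ, ?_⟩,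
    hu.isOpen_setOf_eq_of_isMaxOn hmax⟩
  have : (𝓝[S] ξ).NeBot := mem_closure_iff_nhdsWithin_neBot.1 hξ
  exact tendsto_nhds_unique ((hu.continuousAt (hcl hξ)).tendsto.mono_left nhdsWithin_le_nhds)
    (tendsto_const_nhds.congr' (eventually_mem_nhdsWithin.mono fun z (hz : z ∈ S) => hz.2.symm))

end IsHarmonicOn

theorem closure_setOf_le_subset {c : ℝ} (hfr : ∀ ξ ∈ frontier U, ∀ᶠ z in 𝓝[U] ξ, u z < c) :
    closure {z | z ∈ U ∧ c ≤ u z} ⊆ U := by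
  set T := {z | z ∈ U ∧ c ≤ u z}
  have hTU : T ⊆ U := fun z hz => hz.1
  intro ξ hξ
  by_contra hξU
  have hξfr : ξ ∈ frontier U := ⟨closure_mono hTU hξ, fun h => hξU (interior_subset h)⟩
  have : (𝓝[T] ξ).NeBot := mem_closure_iff_nhdsWithin_neBot.1 hξ
  obtain ⟨z, hzc, hz⟩ := (((hfr ξ hξfr).filter_mono (nhdsWithin_mono ξ hTU)).and
    (eventually_mem_nhdsWithin.mono fun z (hz : z ∈ T) => hz.2)).exists
  exact hzc.not_ge hz

theorem IsHarmonicOn.lt_of_eventually_lt (hu : IsHarmonicOn u U) {c : ℝ}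
    (hfr : ∀ ξ ∈ frontier U, ∀ᶠ z in 𝓝[U] ξ, u z < c)
    (hinf : ∀ᶠ z in cobounded ℂ, u z < c) {z : ℂ} (hz : z ∈ U) : u z < c := by
  by_contra! hcz
  set T := {w | w ∈ U ∧ c ≤ u w}
  have hT_sub : closure T ⊆ U := closure_setOf_le_subset hfr
  have hT_bdd : IsBounded T :=
    (isBounded_compl_iff.2 hinf).subset fun w hw hw' => (not_lt.2 hw.2) hw'
  obtain ⟨z₁, hz₁T, hz₁max⟩ := hT_bdd.isCompact_closure.exists_isMaxOn
    ⟨z, subset_closure ⟨hz, hcz⟩⟩ fun w hw => (hu.continuousAt (hT_sub hw)).continuousWithinAt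
  have hcz₁ : c ≤ u z₁ := hcz.trans (hz₁max (subset_closure ⟨hz, hcz⟩))
  have hmax : IsMaxOn u U z₁ := fun w hw => by
    rcases le_or_gt c (u w) with h | h
    · exact hz₁max (subset_closure ⟨hw, h⟩)
    · exact h.le.trans hcz₁
  set S := {w | w ∈ U ∧ u w = u z₁}
  have hST : S ⊆ T := fun w hw => ⟨hw.1, hw.2 ▸ hcz₁⟩
  have hS : S = univ := (hu.isClopen_setOf_eq_of_isMaxOn hmax
    ((closure_mono hST).trans hT_sub)).eq_univ ⟨z₁, hT_sub hz₁T, rfl⟩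
  exact NormedSpace.unbounded_univ ℝ ℂ (hS ▸ hT_bdd.subset hST)

theorem tendsto_sub_mul_cobounded_atBot {g₁ g₂ : ℂ → ℝ}
    (hb₁ : ∃ C : ℝ, ∀ᶠ z in cobounded ℂ, |g₁ z - Real.log ‖z‖| ≤ C)
    (hb₂ : ∃ C : ℝ, ∀ᶠ z in cobounded ℂ, |g₂ z - Real.log ‖z‖| ≤ C) {a : ℝ} (ha : 1 < a) :
    Tendsto (fun z => g₁ z - a * g₂ z) (cobounded ℂ) atBot := by
  obtain ⟨C₁, hC₁⟩ := hb₁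
  obtain ⟨C₂, hC₂⟩ := hb₂
  have hlog : Tendsto (fun z : ℂ => (a - 1) * Real.log ‖z‖) (cobounded ℂ) atTop :=
    (Real.tendsto_log_atTop.comp tendsto_norm_cobounded_atTop).const_mul_atTop (by linarith)
  refine tendsto_atBot_mono' _ ?_
    (tendsto_atBot_add_const_left _ (C₁ + a * C₂) (tendsto_neg_atTop_atBot.comp hlog))
  filter_upwards [hC₁, hC₂] with z hz₁ hz₂
  have hg₁ := (abs_le.1 hz₁).2
  have hg₂ := (abs_le.1 hz₂).1
  simp only [Function.comp_apply]
  nlinarith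

theorem green_function_le {g₁ g₂ : ℂ → ℝ} (h₁ : IsHarmonicOn g₁ U) (h₂ : IsHarmonicOn g₂ U)
    (hb₁ : ∃ C : ℝ, ∀ᶠ z in cobounded ℂ, |g₁ z - Real.log ‖z‖| ≤ C)
    (hb₂ : ∃ C : ℝ, ∀ᶠ z in cobounded ℂ, |g₂ z - Real.log ‖z‖| ≤ C)
    (hbd₁ : ∀ ξ ∈ frontier U, Tendsto g₁ (𝓝[U] ξ) (𝓝 0))
    (hbd₂ : ∀ ξ ∈ frontier U, Tendsto g₂ (𝓝[U] ξ) (𝓝 0)) {z : ℂ} (hz : z ∈ U) :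
    g₁ z ≤ g₂ z := by
  have key : ∀ ε > 0, g₁ z - (1 + ε) * g₂ z < ε := fun ε hε =>
    (h₁.sub (h₂.const_mul (1 + ε))).lt_of_eventually_lt
      (fun ξ hξ => ((hbd₁ ξ hξ).sub ((hbd₂ ξ hξ).const_mul (1 + ε))).eventually
        (gt_mem_nhds (by simpa using hε)))
      ((tendsto_sub_mul_cobounded_atBot hb₁ hb₂ (by linarith)).eventually_lt_atBot ε) hz
  have hlim : Tendsto (fun ε => ε + (1 + ε) * g₂ z) (𝓝[>] 0) (𝓝 (g₂ z)) := by
    have hcont : Continuous fun ε : ℝ => ε + (1 + ε) * g₂ z := by fun_prop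
    simpa using (hcont.tendsto 0).mono_left nhdsWithin_le_nhds
  refine ge_of_tendsto hlim (eventually_nhdsWithin_of_forall fun ε hε => ?_)
  linarith [key ε hε]

theorem green_function_unique_general (U : Set ℂ)
    (g₁ g₂ : ℂ → ℝ)
    (h₁ : IsHarmonicOn g₁ U) (h₂ : IsHarmonicOn g₂ U)
    (hb₁ : ∃ C : ℝ, ∀ᶠ z in Bornology.cobounded ℂ, |g₁ z - Real.log ‖z‖| ≤ C)
    (hb₂ : ∃ C : ℝ, ∀ᶠ z in Bornology.cobounded ℂ, |g₂ z - Real.log ‖z‖| ≤ C)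
    (hbd₁ : ∀ ξ ∈ frontier U, Filter.Tendsto g₁ (nhdsWithin ξ U) (nhds 0))
    (hbd₂ : ∀ ξ ∈ frontier U, Filter.Tendsto g₂ (nhdsWithin ξ U) (nhds 0)) :
    Set.EqOn g₁ g₂ U := fun _ hz =>
  le_antisymm (green_function_le h₁ h₂ hb₁ hb₂ hbd₁ hbd₂ hz)
    (green_function_le h₂ h₁ hb₂ hb₁ hbd₂ hbd₁ hz)

/-- Uniqueness of the Green function: if `U ⊆ ℂ` is open with compact complement and
`g₁, g₂` are both Green functions for `U` (positive, harmonic on `U`, with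
`g(z) − log|z|` bounded at infinity and boundary limit `0`), then `g₁ = g₂` on `U`. -/
theorem green_function_unique (U : Set ℂ) (hU : IsOpen U) (hKc : IsCompact Uᶜ)
    (g₁ g₂ : ℂ → ℝ)
    (hpos₁ : ∀ z ∈ U, 0 < g₁ z) (hpos₂ : ∀ z ∈ U, 0 < g₂ z)
    (h₁ : IsHarmonicOn g₁ U) (h₂ : IsHarmonicOn g₂ U)
    (hb₁ : ∃ C : ℝ, ∀ᶠ z in Bornology.cobounded ℂ, |g₁ z - Real.log ‖z‖| ≤ C)
    (hb₂ : ∃ C : ℝ, ∀ᶠ z in Bornology.cobounded ℂ, |g₂ z - Real.log ‖z‖| ≤ C)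
    (hbd₁ : ∀ ξ ∈ frontier U, Filter.Tendsto g₁ (nhdsWithin ξ U) (nhds 0))
    (hbd₂ : ∀ ξ ∈ frontier U, Filter.Tendsto g₂ (nhdsWithin ξ U) (nhds 0)) :
    Set.EqOn g₁ g₂ U :=
  green_function_unique_general U g₁ g₂ h₁ h₂ hb₁ hb₂ hbd₁ hbd₂
end

section
/- Let f : ℂ³ → ℂ³ be continuously differentiable, K⁺ = {m : supₙ ‖fⁿ(m)‖ < ∞} nonempty, and suppose R₀ > 0 is such that ‖fⁿ(z₀)‖ ≤ R₀ for all n ≥ 0 and all z₀ ∈ K⁺. Fix R ≥ R₀ + 1, set H(R) = sup_{‖z‖≤R} ‖df(z)‖, and assume H(R) > 1. If z₁ ∉ K⁺, z₀ ∈ K⁺ realizes the distance d(z₁, K⁺) = ‖z₁ − z₀‖, and N = min{n ≥ 0 : ‖fⁿ(z₁)‖ > R} is finite, then H(R)^N · d(z₁, K⁺) ≥ 1. -/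
/-!
Up to the escape time `N` both orbits stay in the closed ball of radius `R`, on which the mean
value inequality makes `f` Lipschitz with constant `H(R)`; hence
`‖fᴺ z₁ - fᴺ z₀‖ ≤ H(R)ᴺ ‖z₁ - z₀‖`. The left side is at least `‖fᴺ z₁‖ - ‖fᴺ z₀‖ > R - R₀ ≥ 1`.
-/

open Metric

theorem LipschitzOnWith.dist_iterate_le {α : Type*} [PseudoMetricSpace α] {f : α → α}
    {s : Set α} {K : NNReal} (hf : LipschitzOnWith K f s) {x y : α} {n : ℕ}
    (hx : ∀ k < n, f^[k] x ∈ s) (hy : ∀ k < n, f^[k] y ∈ s) :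
    dist (f^[n] x) (f^[n] y) ≤ K ^ n * dist x y := by
  induction n with
  | zero => simp
  | succ n ih =>
    calc dist (f^[n + 1] x) (f^[n + 1] y)
        = dist (f (f^[n] x)) (f (f^[n] y)) := by
          rw [Function.iterate_succ_apply', Function.iterate_succ_apply']
      _ ≤ K * dist (f^[n] x) (f^[n] y) :=
          hf.dist_le_mul _ (hx n n.lt_succ_self) _ (hy n n.lt_succ_self)
      _ ≤ K * (K ^ n * dist x y) := by
          gcongr
          exact ih (fun k hk => hx k (hk.trans n.lt_succ_self))
            (fun k hk => hy k (hk.trans n.lt_succ_self))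
      _ = K ^ (n + 1) * dist x y := by ring

theorem ContDiff.lipschitzOnWith_closedBall_sSup_norm_fderiv {E F : Type*}
    [NormedAddCommGroup E] [NormedSpace ℝ E] [ProperSpace E]
    [NormedAddCommGroup F] [NormedSpace ℝ F] {f : E → F} (hf : ContDiff ℝ 1 f) (x : E) (r : ℝ) :
    LipschitzOnWith (sSup ((fun z => ‖fderiv ℝ f z‖) '' closedBall x r)).toNNReal f
      (closedBall x r) := by
  have hbdd : BddAbove ((fun z => ‖fderiv ℝ f z‖) '' closedBall x r) :=
    (isCompact_closedBall x r).bddAbove_image (hf.continuous_fderiv one_ne_zero).norm.continuousOn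
  refine (convex_closedBall x r).lipschitzOnWith_of_nnnorm_fderiv_le
    (fun z _ => hf.differentiable one_ne_zero z) fun z hz => ?_
  rw [← NNReal.coe_le_coe, coe_nnnorm]
  exact (le_csSup hbdd ⟨z, hz, rfl⟩).trans (Real.le_coe_toNNReal _)

theorem escape_time_distance_estimate_general
    (f : EuclideanSpace ℂ (Fin 3) → EuclideanSpace ℂ (Fin 3))
    (hf : ContDiff ℝ 1 f)
    (Kp : Set (EuclideanSpace ℂ (Fin 3)))
    (R₀ : ℝ) (hbd : ∀ z₀ ∈ Kp, ∀ n : ℕ, ‖f^[n] z₀‖ ≤ R₀)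
    (R : ℝ) (hR : R₀ + 1 ≤ R)
    (HR : ℝ)
    (hHR : HR = sSup ((fun z => ‖fderiv ℝ f z‖) ''
      Metric.closedBall (0 : EuclideanSpace ℂ (Fin 3)) R))
    (z₁ z₀ : EuclideanSpace ℂ (Fin 3)) (hz₀ : z₀ ∈ Kp)
    (hdist : Metric.infDist z₁ Kp = ‖z₁ - z₀‖)
    (N : ℕ) (hN : R < ‖f^[N] z₁‖) (hNmin : ∀ n < N, ‖f^[n] z₁‖ ≤ R) :
    1 ≤ HR ^ N * Metric.infDist z₁ Kp := by
  have hHR_nonneg : 0 ≤ HR := hHR ▸ Real.sSup_nonneg (by rintro _ ⟨z, -, rfl⟩; positivity)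
  have hlip := hHR ▸ hf.lipschitzOnWith_closedBall_sSup_norm_fderiv 0 R
  have horbit₁ : ∀ k < N, f^[k] z₁ ∈ closedBall 0 R :=
    fun k hk => mem_closedBall_zero_iff.2 (hNmin k hk)
  have horbit₀ : ∀ k < N, f^[k] z₀ ∈ closedBall 0 R :=
    fun k _ => mem_closedBall_zero_iff.2 ((hbd z₀ hz₀ k).trans (by linarith))
  have hspread := hlip.dist_iterate_le horbit₁ horbit₀
  rw [Real.coe_toNNReal _ hHR_nonneg, dist_eq_norm, dist_eq_norm] at hspread
  rw [hdist]
  linarith [norm_sub_norm_le (f^[N] z₁) (f^[N] z₀), hbd z₀ hz₀ N]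

/-- Fornaess–Sibony type estimate: if `z₁ ∉ K⁺`, `z₀ ∈ K⁺` realizes
`d(z₁,K⁺) = ‖z₁ − z₀‖`, orbits in `K⁺` stay in the ball of radius `R₀`,
`R ≥ R₀ + 1`, `H(R) = sup_{‖z‖≤R} ‖df(z)‖ > 1`, and
`N = min{n : ‖fⁿ(z₁)‖ > R}`, then `H(R)^N · d(z₁,K⁺) ≥ 1`. -/
theorem escape_time_distance_estimate
    (f : EuclideanSpace ℂ (Fin 3) → EuclideanSpace ℂ (Fin 3))
    (hf : ContDiff ℝ 1 f)
    (Kp : Set (EuclideanSpace ℂ (Fin 3)))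
    (hKp : Kp = {m | ∃ M : ℝ, ∀ n : ℕ, ‖f^[n] m‖ ≤ M})
    (hne : Kp.Nonempty)
    (R₀ : ℝ) (hR₀ : 0 < R₀) (hbd : ∀ z₀ ∈ Kp, ∀ n : ℕ, ‖f^[n] z₀‖ ≤ R₀)
    (R : ℝ) (hR : R₀ + 1 ≤ R)
    (HR : ℝ)
    (hHR : HR = sSup ((fun z => ‖fderiv ℝ f z‖) ''
      Metric.closedBall (0 : EuclideanSpace ℂ (Fin 3)) R))
    (hHR1 : 1 < HR)
    (z₁ z₀ : EuclideanSpace ℂ (Fin 3)) (hz₁ : z₁ ∉ Kp) (hz₀ : z₀ ∈ Kp)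
    (hdist : Metric.infDist z₁ Kp = ‖z₁ - z₀‖)
    (N : ℕ) (hN : R < ‖f^[N] z₁‖) (hNmin : ∀ n < N, ‖f^[n] z₁‖ ≤ R) :
    1 ≤ HR ^ N * Metric.infDist z₁ Kp :=
  escape_time_distance_estimate_general f hf Kp R₀ hbd R hR HR hHR z₁ z₀ hz₀ hdist N hN hNmin
end
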